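/- Let f : X → Y be an injective affine map between CAT(0) spaces whose rescaling function ρ is bounded between m > 0 and M < ∞. Then for every ε > 0 there is δ > 0 such that whenever x, y, z ∈ X are distinct points with Alexandrov angle ∠x(y,z) < δ, the rescaling constants satisfy |ρ([x,y]) − ρ([x,z])| < ε. -/

import Mathlib

open Real Filter

def IsUnitSpeedOn {X : Type*} [MetricSpace X] (γ : ℝ → X) (s : Set ℝ) : Prop :=
  ∀ a ∈ s, ∀ b ∈ s, dist (γ a) (γ b) = |a - b|

def GeodesicMetricSpace (X : Type*) [MetricSpace X] : Prop :=
  ∀ x y : X, ∃ γ : ℝ → X, γ 0 = x ∧ γ (dist x y) = y ∧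
    IsUnitSpeedOn γ (Set.Icc 0 (dist x y))

def CAT0Space (X : Type*) [MetricSpace X] : Prop :=
  GeodesicMetricSpace X ∧ ∀ x y m z : X,
    dist x m = dist x y / 2 → dist y m = dist x y / 2 →
    dist z m ^ 2 ≤ dist z x ^ 2 / 2 + dist z y ^ 2 / 2 - dist x y ^ 2 / 4

/-- The Euclidean comparison angle at `x` of the triple `(x, y, z)`. -/
noncomputable def compAngle {X : Type*} [MetricSpace X] (x y z : X) : ℝ :=
  Real.arccos ((dist x y ^ 2 + dist x z ^ 2 - dist y z ^ 2) / (2 * dist x y * dist x z))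

/-!
Along unit-speed geodesics `α`, `β` issuing from `x`, the images `f (α t)`, `f (β t)` lie at
distances `ρα t` and `ρβ t` from `f x`, so `|ρα - ρβ| t ≤ dist (f (α t)) (f (β t))`. Since `f`
rescales every geodesic by at most `M`, it is `M`-Lipschitz, and in the isosceles comparison
triangle `dist (α t) (β t) = 2 t sin (θₜ / 2) ≤ t θₜ`. Dividing by `t` and letting `t → 0⁺`
yields `|ρα - ρβ| ≤ M ∠ₓ(y, z)`.
-/

open Set

section Speed

variable {Z : Type*} [MetricSpace Z]

theorem dist_apply_zero_of_speed {g : ℝ → Z} {ρ L t : ℝ}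
    (hg : ∀ a ∈ Icc 0 L, ∀ b ∈ Icc 0 L, dist (g a) (g b) = ρ * |a - b|) (ht : t ∈ Icc 0 L) :
    dist (g 0) (g t) = ρ * t := by
  rw [hg 0 ⟨le_rfl, ht.1.trans ht.2⟩ t ht, zero_sub, abs_neg, abs_of_nonneg ht.1]

theorem IsUnitSpeedOn.dist_apply_zero {γ : ℝ → Z} {L t : ℝ} (hγ : IsUnitSpeedOn γ (Icc 0 L))
    (ht : t ∈ Icc 0 L) : dist (γ 0) (γ t) = t := by
  simpa using dist_apply_zero_of_speed (ρ := 1) (fun a ha b hb => by simpa using hγ a ha b hb) ht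

end Speed

theorem dist_le_mul_compAngle {X : Type*} [MetricSpace X] {x p q : X} {t : ℝ} (ht : 0 < t)
    (hp : dist x p = t) (hq : dist x q = t) : dist p q ≤ t * compAngle x p q := by
  set d := dist p q
  have hd : d ≤ 2 * t := by
    have := dist_triangle_left p q x
    linarith
  have hcos : Real.cos (compAngle x p q) = 1 - d ^ 2 / (2 * t ^ 2) := by
    have hval : (dist x p ^ 2 + dist x q ^ 2 - d ^ 2) / (2 * dist x p * dist x q)
        = 1 - d ^ 2 / (2 * t ^ 2) := by
      rw [hp, hq]; field_simp; ring
    have hle : d ^ 2 / (2 * t ^ 2) ≤ 2 := by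
      rw [div_le_iff₀ (by positivity)]; nlinarith [dist_nonneg (x := p) (y := q)]
    have hnn : 0 ≤ d ^ 2 / (2 * t ^ 2) := by positivity
    rw [compAngle, hval, Real.cos_arccos (by linarith) (by linarith)]
  have hsq : d ^ 2 ≤ t ^ 2 * compAngle x p q ^ 2 := by
    have hθ := (Real.one_sub_sq_div_two_le_cos (x := compAngle x p q)).trans_eq hcos
    have hhalf : d ^ 2 / t ^ 2 = 2 * (d ^ 2 / (2 * t ^ 2)) := by field_simp
    rw [← div_le_iff₀' (by positivity)]
    linarith
  exact le_of_sq_le_sq (by rwa [mul_pow]) (mul_nonneg ht.le (Real.arccos_nonneg _))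

theorem abs_sub_speed_mul_le_dist {X Y : Type*} [MetricSpace Y] {f : X → Y} {α β : ℝ → X}
    {Lα Lβ ρα ρβ : ℝ}
    (hfα : ∀ a ∈ Icc 0 Lα, ∀ b ∈ Icc 0 Lα, dist (f (α a)) (f (α b)) = ρα * |a - b|)
    (hfβ : ∀ a ∈ Icc 0 Lβ, ∀ b ∈ Icc 0 Lβ, dist (f (β a)) (f (β b)) = ρβ * |a - b|)
    (hαβ : α 0 = β 0) {t : ℝ} (htα : t ∈ Icc 0 Lα) (htβ : t ∈ Icc 0 Lβ) :
    |ρα - ρβ| * t ≤ dist (f (α t)) (f (β t)) := by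
  have hα := dist_apply_zero_of_speed hfα htα
  have hβ := dist_apply_zero_of_speed hfβ htβ
  rw [hαβ] at hα
  calc |ρα - ρβ| * t = |ρα * t - ρβ * t| := by rw [← sub_mul, abs_mul, abs_of_nonneg htα.1]
    _ = |dist (f (α t)) (f (β 0)) - dist (f (β t)) (f (β 0))| := by
      rw [dist_comm (f (α t)), dist_comm (f (β t)), hα, hβ]
    _ ≤ dist (f (α t)) (f (β t)) := abs_dist_sub_le _ _ _

section Affine

variable {X Y : Type*} [MetricSpace X] [MetricSpace Y] {f : X → Y} {M : ℝ}

theorem GeodesicMetricSpace.dist_map_le (hX : GeodesicMetricSpace X)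
    (hf : ∀ (γ : ℝ → X) (L : ℝ), 0 ≤ L → IsUnitSpeedOn γ (Icc 0 L) →
      ∃ ρ ≤ M, ∀ a ∈ Icc 0 L, ∀ b ∈ Icc 0 L, dist (f (γ a)) (f (γ b)) = ρ * |a - b|)
    (p q : X) : dist (f p) (f q) ≤ M * dist p q := by
  obtain ⟨γ, hγ0, hγL, hγ⟩ := hX p q
  obtain ⟨ρ, hρM, hρ⟩ := hf γ (dist p q) dist_nonneg hγ
  have := dist_apply_zero_of_speed hρ ⟨dist_nonneg, le_rfl⟩
  rw [hγ0, hγL] at this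
  rw [this]
  exact mul_le_mul_of_nonneg_right hρM dist_nonneg

variable {α β : ℝ → X} {Lα Lβ ρα ρβ : ℝ}

theorem abs_sub_speed_le_mul_angle (hX : GeodesicMetricSpace X) (hM : 0 ≤ M)
    (hf : ∀ (γ : ℝ → X) (L : ℝ), 0 ≤ L → IsUnitSpeedOn γ (Icc 0 L) →
      ∃ ρ ≤ M, ∀ a ∈ Icc 0 L, ∀ b ∈ Icc 0 L, dist (f (γ a)) (f (γ b)) = ρ * |a - b|)
    (hLα : 0 < Lα) (hLβ : 0 < Lβ) (hα : IsUnitSpeedOn α (Icc 0 Lα))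
    (hβ : IsUnitSpeedOn β (Icc 0 Lβ)) (hαβ : α 0 = β 0)
    (hfα : ∀ a ∈ Icc 0 Lα, ∀ b ∈ Icc 0 Lα, dist (f (α a)) (f (α b)) = ρα * |a - b|)
    (hfβ : ∀ a ∈ Icc 0 Lβ, ∀ b ∈ Icc 0 Lβ, dist (f (β a)) (f (β b)) = ρβ * |a - b|) {θ : ℝ}
    (hθ : Tendsto (fun t => compAngle (α 0) (α t) (β t)) (nhdsWithin 0 (Ioi 0)) (nhds θ)) :
    |ρα - ρβ| ≤ M * θ := by
  refine ge_of_tendsto (hθ.const_mul M) ?_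
  filter_upwards [Ioo_mem_nhdsGT (lt_min hLα hLβ)] with t ⟨ht0, htL⟩
  have htα : t ∈ Icc 0 Lα := ⟨ht0.le, htL.le.trans (min_le_left _ _)⟩
  have htβ : t ∈ Icc 0 Lβ := ⟨ht0.le, htL.le.trans (min_le_right _ _)⟩
  have hxβ : dist (α 0) (β t) = t := hαβ ▸ hβ.dist_apply_zero htβ
  refine le_of_mul_le_mul_right ?_ ht0
  calc |ρα - ρβ| * t ≤ dist (f (α t)) (f (β t)) := abs_sub_speed_mul_le_dist hfα hfβ hαβ htα htβ
    _ ≤ M * dist (α t) (β t) := hX.dist_map_le hf _ _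
    _ ≤ M * (t * compAngle (α 0) (α t) (β t)) :=
      mul_le_mul_of_nonneg_left (dist_le_mul_compAngle ht0 (hα.dist_apply_zero htα) hxβ) hM
    _ = M * compAngle (α 0) (α t) (β t) * t := by ring

end Affine

theorem small_angles_lemma_general {X Y : Type*} [MetricSpace X] [MetricSpace Y]
    (hX : CAT0Space X) (f : X → Y)
    (m M : ℝ) (hm : 0 < m) (hmM : m ≤ M)
    (haff : ∀ (γ : ℝ → X) (L : ℝ), 0 ≤ L → IsUnitSpeedOn γ (Set.Icc 0 L) →
      ∃ ρ : ℝ, m ≤ ρ ∧ ρ ≤ M ∧ ∀ a ∈ Set.Icc (0:ℝ) L, ∀ b ∈ Set.Icc (0:ℝ) L,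
        dist (f (γ a)) (f (γ b)) = ρ * |a - b|) :
    ∀ ε : ℝ, 0 < ε → ∃ δ : ℝ, 0 < δ ∧
      ∀ (x y z : X) (α β : ℝ → X) (ρα ρβ θ : ℝ),
        x ≠ y → x ≠ z → y ≠ z →
        α 0 = x → α (dist x y) = y → IsUnitSpeedOn α (Set.Icc 0 (dist x y)) →
        β 0 = x → β (dist x z) = z → IsUnitSpeedOn β (Set.Icc 0 (dist x z)) →
        Tendsto (fun t => compAngle x (α t) (β t)) (nhdsWithin 0 (Set.Ioi 0)) (nhds θ) →
        θ < δ →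
        (∀ a ∈ Set.Icc 0 (dist x y), ∀ b ∈ Set.Icc 0 (dist x y),
          dist (f (α a)) (f (α b)) = ρα * |a - b|) →
        (∀ a ∈ Set.Icc 0 (dist x z), ∀ b ∈ Set.Icc 0 (dist x z),
          dist (f (β a)) (f (β b)) = ρβ * |a - b|) →
        |ρα - ρβ| < ε := by
  intro ε hε
  have hM : 0 < M := hm.trans_le hmM
  refine ⟨ε / M, div_pos hε hM, ?_⟩
  rintro x y z α β ρα ρβ θ hxy hxz - rfl - hα hβ0 - hβ hθ hθδ hfα hfβ
  have hf : ∀ (γ : ℝ → X) (L : ℝ), 0 ≤ L → IsUnitSpeedOn γ (Icc 0 L) →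
      ∃ ρ ≤ M, ∀ a ∈ Icc 0 L, ∀ b ∈ Icc 0 L, dist (f (γ a)) (f (γ b)) = ρ * |a - b| :=
    fun γ L hL hγ => (haff γ L hL hγ).imp fun _ hρ => hρ.2
  calc |ρα - ρβ| ≤ M * θ := abs_sub_speed_le_mul_angle hX.1 hM.le hf (dist_pos.2 hxy)
        (dist_pos.2 hxz) hα hβ hβ0.symm hfα hfβ hθ
    _ < M * (ε / M) := mul_lt_mul_of_pos_left hθδ hM
    _ = ε := mul_div_cancel₀ ε hM.ne'

/-- **Small Angles Lemma.** Let `f : X → Y` be an injective affine map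
between CAT(0) spaces whose rescaling constants lie in `[m, M]` with `m > 0`.  For every
`ε > 0` there is `δ > 0` such that whenever `x, y, z` are distinct points and the
Alexandrov angle `∠x(y,z)` (the limit as `t → 0⁺` of comparison angles along unit-speed
geodesics `α = [x,y]`, `β = [x,z]`) is `< δ`, the rescaling constants of `[x,y]` and
`[x,z]` satisfy `|ρ([x,y]) - ρ([x,z])| < ε`. -/
theorem small_angles_lemma {X Y : Type*} [MetricSpace X] [MetricSpace Y]
    (hX : CAT0Space X) (hY : CAT0Space Y) (f : X → Y) (hfinj : Function.Injective f)
    (m M : ℝ) (hm : 0 < m) (hmM : m ≤ M)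
    (haff : ∀ (γ : ℝ → X) (L : ℝ), 0 ≤ L → IsUnitSpeedOn γ (Set.Icc 0 L) →
      ∃ ρ : ℝ, m ≤ ρ ∧ ρ ≤ M ∧ ∀ a ∈ Set.Icc (0:ℝ) L, ∀ b ∈ Set.Icc (0:ℝ) L,
        dist (f (γ a)) (f (γ b)) = ρ * |a - b|) :
    ∀ ε : ℝ, 0 < ε → ∃ δ : ℝ, 0 < δ ∧
      ∀ (x y z : X) (α β : ℝ → X) (ρα ρβ θ : ℝ),
        x ≠ y → x ≠ z → y ≠ z →
        α 0 = x → α (dist x y) = y → IsUnitSpeedOn α (Set.Icc 0 (dist x y)) →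
        β 0 = x → β (dist x z) = z → IsUnitSpeedOn β (Set.Icc 0 (dist x z)) →
        Tendsto (fun t => compAngle x (α t) (β t)) (nhdsWithin 0 (Set.Ioi 0)) (nhds θ) →
        θ < δ →
        (∀ a ∈ Set.Icc 0 (dist x y), ∀ b ∈ Set.Icc 0 (dist x y),
          dist (f (α a)) (f (α b)) = ρα * |a - b|) →
        (∀ a ∈ Set.Icc 0 (dist x z), ∀ b ∈ Set.Icc 0 (dist x z),
          dist (f (β a)) (f (β b)) = ρβ * |a - b|) →
        |ρα - ρβ| < ε :=
  small_angles_lemma_general hX f m M hm hmM haff
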